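/- arXiv:1401.0648 — 7 statements merged into one kernel-verified Lean document; each statement's English description precedes it below -/
import Mathlib

section
/- If every finite subset of an s-theory Γ is satisfiable by some frame, then Γ itself is satisfiable by some frame. -/
inductive PForm (σ : Type) : Type
  | var : σ → PForm σ
  | neg : PForm σ → PForm σ
  | conj : PForm σ → PForm σ → PForm σ
  | disj : PForm σ → PForm σ → PForm σ
  | impl : PForm σ → PForm σ → PForm σ

def PForm.eval {σ : Type} (w : σ → Bool) : PForm σ → Bool
  | .var x => w x
  | .neg A => !(A.eval w)
  | .conj A B => A.eval w && B.eval w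
  | .disj A B => A.eval w || B.eval w
  | .impl A B => !(A.eval w) || B.eval w

/-- s-formulas: strict implication `si A B` (A ⥽ B) and strict nonimplication `sn A B` (A ⋢ B). -/
inductive SForm (σ : Type) : Type
  | si : PForm σ → PForm σ → SForm σ
  | sn : PForm σ → PForm σ → SForm σ

/-- A frame (a set of valuations; nonemptiness stated separately) satisfies an s-formula. -/
def SForm.sat {σ : Type} (R : Set (σ → Bool)) : SForm σ → Prop
  | .si A B => ∀ w ∈ R, A.eval w = true → B.eval w = true
  | .sn A B => ∃ w ∈ R, A.eval w = true ∧ B.eval w = false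

/-- Strict negation: swaps ⥽ and ⋢. -/
def SForm.sneg {σ : Type} : SForm σ → SForm σ
  | .si A B => .sn A B
  | .sn A B => .si A B

/-!
In the product topology `σ → Bool` is compact and every `{w | A.eval w = b}` is clopen. Take as
frame the closed set of valuations obeying every strict implication of `Γ` pointwise. A frame
satisfying a finite `Δ ⊆ Γ` lies in the valuations obeying the implications of `Δ`, and if
`A ⋢ B ∈ Δ` it contains a witness for it; by compactness the witnesses for these finite
approximations yield one in the frame itself. Nonemptiness follows in the same way.
-/

open Set

variable {σ : Type}

namespace PForm

theorem continuous_eval (A : PForm σ) : Continuous fun w : σ → Bool => A.eval w := by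
  induction A with
  | var x => exact continuous_apply x
  | neg A ih => exact continuous_of_discreteTopology.comp ih
  | conj A B ihA ihB =>
    exact (continuous_of_discreteTopology (f := fun p : Bool × Bool => p.1 && p.2)).comp
      (ihA.prodMk ihB)
  | disj A B ihA ihB =>
    exact (continuous_of_discreteTopology (f := fun p : Bool × Bool => p.1 || p.2)).comp
      (ihA.prodMk ihB)
  | impl A B ihA ihB =>
    exact (continuous_of_discreteTopology (f := fun p : Bool × Bool => !p.1 || p.2)).comp
      (ihA.prodMk ihB)

theorem isClosed_setOf_eval_eq (A : PForm σ) (b : Bool) :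
    IsClosed {w : σ → Bool | A.eval w = b} :=
  (isClosed_discrete {b}).preimage A.continuous_eval

end PForm

namespace SForm

/-- The pointwise constraint that `φ` puts on every world of a frame satisfying it. -/
def constraint : SForm σ → Set (σ → Bool)
  | .si A B => {w | A.eval w = true → B.eval w = true}
  | .sn _ _ => univ

theorem isClosed_constraint (φ : SForm σ) : IsClosed φ.constraint := by
  cases φ with
  | si A B =>
    have : (si A B).constraint = {w | A.eval w = false} ∪ {w | B.eval w = true} := by
      ext w
      simp only [constraint, mem_ofPred_eq, mem_union]
      cases A.eval w <;> simp
    rw [this]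
    exact (A.isClosed_setOf_eval_eq false).union (B.isClosed_setOf_eval_eq true)
  | sn _ _ => exact isClosed_univ

theorem subset_constraint_of_sat {R : Set (σ → Bool)} {φ : SForm σ} (h : φ.sat R) :
    R ⊆ φ.constraint := by
  cases φ with
  | si _ _ => exact h
  | sn _ _ => exact subset_univ R

def canonicalFrame (Γ : Set (SForm σ)) : Set (σ → Bool) :=
  ⋂ φ ∈ Γ, φ.constraint

theorem sat_canonicalFrame_si {Γ : Set (SForm σ)} {A B : PForm σ} (h : si A B ∈ Γ) :
    (si A B).sat (canonicalFrame Γ) :=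
  fun _ hw => mem_iInter₂.1 hw _ h

theorem inter_canonicalFrame_nonempty {Γ : Set (SForm σ)} {T : Set (σ → Bool)}
    (hT : IsClosed T)
    (hfin : ∀ Δ ⊆ Γ, Δ.Finite → ∃ R, (T ∩ R).Nonempty ∧ ∀ φ ∈ Δ, φ.sat R) :
    (T ∩ canonicalFrame Γ).Nonempty := by
  rw [canonicalFrame, biInter_eq_iInter]
  refine hT.isCompact.inter_iInter_nonempty _ (fun φ => φ.1.isClosed_constraint) fun u => ?_
  obtain ⟨R, ⟨w, hwT, hwR⟩, hsat⟩ :=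
    hfin (Subtype.val '' (u : Set Γ)) (image_subset_iff.2 fun φ _ => φ.2)
      (u.finite_toSet.image _)
  refine ⟨w, hwT, mem_iInter₂.2 fun φ hφ => ?_⟩
  exact subset_constraint_of_sat (hsat φ (mem_image_of_mem _ hφ)) hwR

def Satisfiable (Δ : Set (SForm σ)) : Prop :=
  ∃ R : Set (σ → Bool), R.Nonempty ∧ ∀ φ ∈ Δ, φ.sat R

section FinitelySatisfiable

variable {Γ : Set (SForm σ)} (h : ∀ Δ ⊆ Γ, Δ.Finite → Satisfiable Δ)
include h

theorem canonicalFrame_nonempty : (canonicalFrame Γ).Nonempty := by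
  simpa using inter_canonicalFrame_nonempty isClosed_univ fun Δ hΔ hfin =>
    (h Δ hΔ hfin).imp fun R hR => ⟨by simpa using hR.1, hR.2⟩

theorem sat_canonicalFrame_sn {A B : PForm σ} (hφ : sn A B ∈ Γ) :
    (sn A B).sat (canonicalFrame Γ) := by
  have hT : IsClosed {w : σ → Bool | A.eval w = true ∧ B.eval w = false} :=
    (A.isClosed_setOf_eval_eq true).inter (B.isClosed_setOf_eval_eq false)
  obtain ⟨w, ⟨hA, hB⟩, hw⟩ := inter_canonicalFrame_nonempty hT fun Δ hΔ hfin => by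
    obtain ⟨R, -, hsat⟩ := h (insert (sn A B) Δ) (insert_subset hφ hΔ) (hfin.insert _)
    obtain ⟨w, hwR, hwA, hwB⟩ := hsat _ (mem_insert _ _)
    exact ⟨R, ⟨w, ⟨hwA, hwB⟩, hwR⟩, fun φ hφ => hsat φ (mem_insert_of_mem _ hφ)⟩
  exact ⟨w, hw, hA, hB⟩

theorem sat_canonicalFrame {φ : SForm σ} (hφ : φ ∈ Γ) : φ.sat (canonicalFrame Γ) := by
  cases φ with
  | si _ _ => exact sat_canonicalFrame_si hφ
  | sn _ _ => exact sat_canonicalFrame_sn h hφ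

end FinitelySatisfiable

end SForm

open SForm in
theorem stmt0_general {σ : Type} (Γ : Set (SForm σ))
    (h : ∀ Δ ⊆ Γ, Δ.Finite → ∃ R : Set (σ → Bool), R.Nonempty ∧ ∀ φ ∈ Δ, φ.sat R) :
    ∃ R : Set (σ → Bool), R.Nonempty ∧ ∀ φ ∈ Γ, φ.sat R :=
  ⟨canonicalFrame Γ, canonicalFrame_nonempty h, fun _ hφ => sat_canonicalFrame h hφ⟩

theorem stmt0 {σ : Type} [Infinite σ] (Γ : Set (SForm σ))
    (h : ∀ Δ ⊆ Γ, Δ.Finite → ∃ R : Set (σ → Bool), R.Nonempty ∧ ∀ φ ∈ Δ, φ.sat R) :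
    ∃ R : Set (σ → Bool), R.Nonempty ∧ ∀ φ ∈ Γ, φ.sat R :=
  stmt0_general Γ h
end

section
/- Soundness of the F₁ deductive system: if φ is derivable from a set Γ of F₁-formulas using the rules (I) derive X ⥽ X; (HS) from X ⥽ Y and Y ⥽ Z derive X ⥽ Z; (N) from X ⋢ Y, X ⥽ W, and Z ⥽ Y derive W ⋢ Z; then every frame satisfying Γ satisfies φ. -/
/-- F₁-formulas: strict implications `imp X Y` (X ⥽ Y) and nonimplications `nimp X Y` (X ⋢ Y)
between single propositional variables. -/
inductive F1 (σ : Type) : Type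
  | imp : σ → σ → F1 σ
  | nimp : σ → σ → F1 σ

/-- A frame satisfies an F₁-formula. -/
def F1.sat {σ : Type} (R : Set (σ → Bool)) : F1 σ → Prop
  | .imp X Y => ∀ w ∈ R, w X = true → w Y = true
  | .nimp X Y => ∃ w ∈ R, w X = true ∧ w Y = false

/-- Derivability in the F₁ deductive system: rules (I), (HS), (N). -/
inductive Der1 {σ : Type} (Γ : Set (F1 σ)) : F1 σ → Prop
  | mem {φ : F1 σ} : φ ∈ Γ → Der1 Γ φ
  | I (X : σ) : Der1 Γ (.imp X X)
  | HS {X Y Z : σ} : Der1 Γ (.imp X Y) → Der1 Γ (.imp Y Z) → Der1 Γ (.imp X Z)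
  | N {W X Y Z : σ} : Der1 Γ (.nimp X Y) → Der1 Γ (.imp X W) → Der1 Γ (.imp Z Y) →
      Der1 Γ (.nimp W Z)

namespace F1

variable {σ : Type} {R : Set (σ → Bool)} {W X Y Z : σ}

theorem sat_imp_self (X : σ) : (imp X X).sat R :=
  fun _ _ hX => hX

theorem sat_imp_trans (hXY : (imp X Y).sat R) (hYZ : (imp Y Z).sat R) : (imp X Z).sat R :=
  fun w hw hX => hYZ w hw (hXY w hw hX)

/-- Rule (N): a witness of `X ⋢ Y` is also a witness of `W ⋢ Z`. -/
theorem sat_nimp_of_imp (hXY : (nimp X Y).sat R) (hXW : (imp X W).sat R)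
    (hZY : (imp Z Y).sat R) : (nimp W Z).sat R := by
  obtain ⟨w, hw, hX, hY⟩ := hXY
  refine ⟨w, hw, hXW w hw hX, Bool.eq_false_iff.2 fun hZ => ?_⟩
  simp [hZY w hw hZ] at hY

end F1

theorem stmt5_general {σ : Type} (Γ : Set (F1 σ)) (φ : F1 σ) (h : Der1 Γ φ)
    (R : Set (σ → Bool)) (hΓ : ∀ ψ ∈ Γ, ψ.sat R) :
    φ.sat R := by
  induction h with
  | mem hψ => exact hΓ _ hψ
  | I X => exact F1.sat_imp_self X
  | HS _ _ ihXY ihYZ => exact F1.sat_imp_trans ihXY ihYZ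
  | N _ _ _ ihXY ihXW ihZY => exact F1.sat_nimp_of_imp ihXY ihXW ihZY

theorem stmt5 {σ : Type} (Γ : Set (F1 σ)) (φ : F1 σ) (h : Der1 Γ φ)
    (R : Set (σ → Bool)) (hR : R.Nonempty) (hΓ : ∀ ψ ∈ Γ, ψ.sat R) :
    φ.sat R :=
  stmt5_general Γ φ h R hΓ
end

section
/- Completeness of the F₁ deductive system: if Γ is a consistent (i.e., satisfiable by some frame) set of F₁-formulas, φ is an F₁-formula, and every frame satisfying Γ satisfies φ, then φ is derivable from Γ using rules (I), (HS), and (N). -/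
/-
A formula not derivable from a consistent `Γ` is refuted by a canonical frame. Each
`A ⋢ B ∈ Γ` gets a witnessing valuation closed under the derivable implications: either
`above A` (true exactly at the `V` with `A ⥽ V` derivable) or `notBelow B` (true exactly
at the `V` with `V ⥽ B` not derivable). To refute `X ⥽ Y` add `above X`; to refute
`X ⋢ Y` add the constant valuation `true` and choose `above A` when `Y ⥽ B` is derivable
and `notBelow B` otherwise: then rule (N) rules out `above A` as a witness of `X ⋢ Y`,
and `notBelow B` makes `Y` true.
-/

namespace Der1

variable {σ : Type} {Γ : Set (F1 σ)}

lemma sound {ψ : F1 σ} (h : Der1 Γ ψ) (R : Set (σ → Bool)) (hΓ : ∀ χ ∈ Γ, χ.sat R) :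
    ψ.sat R := by
  induction h with
  | mem h => exact hΓ _ h
  | I X => exact fun _ _ h => h
  | HS _ _ ih₁ ih₂ => exact fun w hw h => ih₂ w hw (ih₁ w hw h)
  | N _ _ _ ihn ih₁ ih₂ =>
    obtain ⟨w, hw, hX, hY⟩ := ihn
    refine ⟨w, hw, ih₁ w hw hX, ?_⟩
    cases hZ : w _
    · rfl
    · simp [ih₂ w hw hZ] at hY

variable (Γ)

def Consistent : Prop := ∀ A B : σ, Der1 Γ (.nimp A B) → ¬ Der1 Γ (.imp A B)

lemma consistent_of_sat {R : Set (σ → Bool)} (hR : ∀ ψ ∈ Γ, ψ.sat R) : Consistent Γ := by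
  intro A B hn hi
  obtain ⟨w, hw, hA, hB⟩ := hn.sound R hR
  simp [hi.sound R hR w hw hA] at hB

def Closed (w : σ → Bool) : Prop :=
  ∀ ⦃V W : σ⦄, Der1 Γ (.imp V W) → w V = true → w W = true

def IsWitness (A B : σ) (w : σ → Bool) : Prop :=
  Closed Γ w ∧ w A = true ∧ w B = false

open Classical in
noncomputable def above (A : σ) : σ → Bool := fun V => decide (Der1 Γ (.imp A V))

open Classical in
noncomputable def notBelow (B : σ) : σ → Bool := fun V => decide (¬ Der1 Γ (.imp V B))

lemma above_eq_true {A V : σ} : above Γ A V = true ↔ Der1 Γ (.imp A V) := by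
  simp [above]

lemma above_eq_false {A V : σ} : above Γ A V = false ↔ ¬ Der1 Γ (.imp A V) := by
  simp [above]

lemma notBelow_eq_true {B V : σ} : notBelow Γ B V = true ↔ ¬ Der1 Γ (.imp V B) := by
  simp [notBelow]

lemma notBelow_eq_false {B V : σ} : notBelow Γ B V = false ↔ Der1 Γ (.imp V B) := by
  simp [notBelow]

lemma closed_above (A : σ) : Closed Γ (above Γ A) := fun _ _ hVW hV =>
  (above_eq_true Γ).2 (((above_eq_true Γ).1 hV).HS hVW)

lemma closed_notBelow (B : σ) : Closed Γ (notBelow Γ B) := fun _ _ hVW hV =>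
  (notBelow_eq_true Γ).2 fun hWB => (notBelow_eq_true Γ).1 hV (hVW.HS hWB)

lemma isWitness_above {A B : σ} (hΓ : Consistent Γ) (h : Der1 Γ (.nimp A B)) :
    IsWitness Γ A B (above Γ A) :=
  ⟨closed_above Γ A, (above_eq_true Γ).2 (I A), (above_eq_false Γ).2 (hΓ A B h)⟩

lemma isWitness_notBelow {A B : σ} (hΓ : Consistent Γ) (h : Der1 Γ (.nimp A B)) :
    IsWitness Γ A B (notBelow Γ B) :=
  ⟨closed_notBelow Γ B, (notBelow_eq_true Γ).2 (hΓ A B h), (notBelow_eq_false Γ).2 (I B)⟩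

def frame (u : σ → Bool) (w : σ → σ → σ → Bool) : Set (σ → Bool) :=
  insert u {v | ∃ A B, F1.nimp A B ∈ Γ ∧ v = w A B}

lemma sat_frame {u : σ → Bool} {w : σ → σ → σ → Bool} (hu : Closed Γ u)
    (hw : ∀ A B, F1.nimp A B ∈ Γ → IsWitness Γ A B (w A B)) :
    ∀ ψ ∈ Γ, ψ.sat (frame Γ u w) := by
  rintro (⟨V, W⟩ | ⟨A, B⟩) hψ
  · rintro v (rfl | ⟨A, B, hAB, rfl⟩)
    · exact hu (mem hψ)
    · exact (hw A B hAB).1 (mem hψ)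
  · exact ⟨w A B, Or.inr ⟨A, B, hψ, rfl⟩, (hw A B hψ).2⟩

lemma imp_of_forall_sat (hΓ : Consistent Γ) {X Y : σ}
    (hsem : ∀ R : Set (σ → Bool), R.Nonempty → (∀ ψ ∈ Γ, ψ.sat R) → (F1.imp X Y).sat R) :
    Der1 Γ (.imp X Y) := by
  have hR : ∀ ψ ∈ Γ, ψ.sat (frame Γ (above Γ X) fun A _ => above Γ A) :=
    sat_frame Γ (closed_above Γ X) fun _ _ hAB => isWitness_above Γ hΓ (mem hAB)
  exact (above_eq_true Γ).1 <|
    hsem _ ⟨_, Set.mem_insert _ _⟩ hR _ (Set.mem_insert _ _) ((above_eq_true Γ).2 (I X))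

open Classical in
lemma nimp_of_forall_sat (hΓ : Consistent Γ) {X Y : σ}
    (hsem : ∀ R : Set (σ → Bool), R.Nonempty → (∀ ψ ∈ Γ, ψ.sat R) → (F1.nimp X Y).sat R) :
    Der1 Γ (.nimp X Y) := by
  by_contra hXY
  let w : σ → σ → σ → Bool := fun A B =>
    if Der1 Γ (.imp Y B) then above Γ A else notBelow Γ B
  have hR : ∀ ψ ∈ Γ, ψ.sat (frame Γ (fun _ => true) w) := by
    refine sat_frame Γ (fun _ _ _ _ => rfl) fun A B hAB => ?_
    by_cases hYB : Der1 Γ (.imp Y B)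
    · simpa only [w, if_pos hYB] using isWitness_above Γ hΓ (mem hAB)
    · simpa only [w, if_neg hYB] using isWitness_notBelow Γ hΓ (mem hAB)
  obtain ⟨v, hv, hX, hY⟩ := hsem _ ⟨_, Set.mem_insert _ _⟩ hR
  obtain rfl | ⟨A, B, hAB, rfl⟩ := hv
  · exact Bool.noConfusion hY
  by_cases hYB : Der1 Γ (.imp Y B)
  · simp only [w, if_pos hYB, above_eq_true] at hX
    exact hXY (N (mem hAB) hX hYB)
  · simp only [w, if_neg hYB, notBelow_eq_false] at hY
    exact hYB hY

end Der1

theorem stmt6_general {σ : Type} (Γ : Set (F1 σ)) (φ : F1 σ)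
    (hcons : ∃ R : Set (σ → Bool), R.Nonempty ∧ ∀ ψ ∈ Γ, ψ.sat R)
    (hsem : ∀ R : Set (σ → Bool), R.Nonempty → (∀ ψ ∈ Γ, ψ.sat R) → φ.sat R) :
    Der1 Γ φ := by
  obtain ⟨R, -, hR⟩ := hcons
  have hΓ := Der1.consistent_of_sat Γ hR
  cases φ with
  | imp => exact Der1.imp_of_forall_sat Γ hΓ hsem
  | nimp => exact Der1.nimp_of_forall_sat Γ hΓ hsem

theorem stmt6 {σ : Type} [Infinite σ] (Γ : Set (F1 σ)) (φ : F1 σ)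
    (hcons : ∃ R : Set (σ → Bool), R.Nonempty ∧ ∀ ψ ∈ Γ, ψ.sat R)
    (hsem : ∀ R : Set (σ → Bool), R.Nonempty → (∀ ψ ∈ Γ, ψ.sat R) → φ.sat R) :
    Der1 Γ φ :=
  stmt6_general Γ φ hcons hsem
end

section
/- Soundness of the F₂ deductive system: if φ is derivable from a set Γ of F₂-formulas using rules (I), (W), (HS), and (N), then every frame satisfying Γ satisfies φ. -/
/-- F₂-formulas: `imp A Y` is the strict implication `A ⥽ Y` and `nimp A Y` the strict
nonimplication `A ⋢ Y`, where `A` is a conjunction of propositional variables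
(modeled as a finite set, required nonempty via `F2.ok`) and `Y` a single variable. -/
inductive F2 (σ : Type) : Type
  | imp : Finset σ → σ → F2 σ
  | nimp : Finset σ → σ → F2 σ

/-- An F₂-formula is well formed when its conjunction of hypotheses is nonempty. -/
def F2.ok {σ : Type} : F2 σ → Prop
  | .imp A _ => A.Nonempty
  | .nimp A _ => A.Nonempty

/-- A frame satisfies an F₂-formula. -/
def F2.sat {σ : Type} (R : Set (σ → Bool)) : F2 σ → Prop
  | .imp A Y => ∀ w ∈ R, (∀ x ∈ A, w x = true) → w Y = true
  | .nimp A Y => ∃ w ∈ R, (∀ x ∈ A, w x = true) ∧ w Y = false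

/-- Derivability in the F₂ deductive system: rules (I), (W), (HS), (N). -/
inductive Der2 {σ : Type} [DecidableEq σ] (Γ : Set (F2 σ)) : F2 σ → Prop
  | mem {φ : F2 σ} : φ ∈ Γ → Der2 Γ φ
  | I (X : σ) : Der2 Γ (.imp {X} X)
  | W {A B : Finset σ} {Y : σ} : Der2 Γ (.imp A Y) → A ⊆ B → Der2 Γ (.imp B Y)
  | HS {A B : Finset σ} {X Y : σ} : Der2 Γ (.imp (insert X B) Y) → Der2 Γ (.imp A X) →
      Der2 Γ (.imp (A ∪ B) Y)
  | N {A B : Finset σ} {X Z : σ} : B.Nonempty → Der2 Γ (.nimp A X) →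
      Der2 Γ (.imp (insert Z A) X) → (∀ Y ∈ B, Der2 Γ (.imp A Y)) →
      Der2 Γ (.nimp B Z)

namespace F2

variable {σ : Type} (R : Set (σ → Bool))

theorem sat_imp_self (X : σ) : (imp {X} X).sat R :=
  fun _ _ hw => hw X (Finset.mem_singleton_self X)

variable {R}

theorem sat_imp_of_subset {A B : Finset σ} {Y : σ} (hA : (imp A Y).sat R) (hAB : A ⊆ B) :
    (imp B Y).sat R :=
  fun w hwR hw => hA w hwR fun x hx => hw x (hAB hx)

variable [DecidableEq σ]

theorem sat_imp_union {A B : Finset σ} {X Y : σ} (hXB : (imp (insert X B) Y).sat R)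
    (hA : (imp A X).sat R) : (imp (A ∪ B) Y).sat R := by
  intro w hwR hw
  have hwX : w X = true := hA w hwR fun y hy => hw y (Finset.mem_union_left B hy)
  refine hXB w hwR fun x hx => ?_
  rcases Finset.mem_insert.mp hx with rfl | hxB
  · exact hwX
  · exact hw x (Finset.mem_union_right A hxB)

/-- A witness of `A ⋢ X` satisfies all of `B` because `A ⥽ Y` for each `Y ∈ B`, and it falsifies
`Z` because otherwise `A ∧ Z ⥽ X` would make `X` true. -/
theorem sat_nimp_of_sat_nimp {A B : Finset σ} {X Z : σ} (hAX : (nimp A X).sat R)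
    (hZAX : (imp (insert Z A) X).sat R) (hAB : ∀ Y ∈ B, (imp A Y).sat R) :
    (nimp B Z).sat R := by
  obtain ⟨w, hwR, hwA, hwX⟩ := hAX
  refine ⟨w, hwR, fun Y hY => hAB Y hY w hwR hwA, ?_⟩
  by_contra hwZ
  have hwZA : ∀ x ∈ insert Z A, w x = true := by
    intro x hx
    rcases Finset.mem_insert.mp hx with rfl | hxA
    · simpa using hwZ
    · exact hwA x hxA
  simp [hZAX w hwR hwZA] at hwX

end F2

theorem stmt8_general {σ : Type} [DecidableEq σ] (Γ : Set (F2 σ))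
    (φ : F2 σ) (h : Der2 Γ φ)
    (R : Set (σ → Bool)) (hΓ : ∀ ψ ∈ Γ, ψ.sat R) :
    φ.sat R := by
  induction h with
  | mem hψ => exact hΓ _ hψ
  | I X => exact F2.sat_imp_self R X
  | W _ hAB ih => exact F2.sat_imp_of_subset ih hAB
  | HS _ _ ihXB ihA => exact F2.sat_imp_union ihXB ihA
  | N _ _ _ _ ihAX ihZAX ihAB => exact F2.sat_nimp_of_sat_nimp ihAX ihZAX ihAB

theorem stmt8 {σ : Type} [DecidableEq σ] (Γ : Set (F2 σ)) (hok : ∀ ψ ∈ Γ, ψ.ok)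
    (φ : F2 σ) (h : Der2 Γ φ)
    (R : Set (σ → Bool)) (hR : R.Nonempty) (hΓ : ∀ ψ ∈ Γ, ψ.sat R) :
    φ.sat R :=
  stmt8_general Γ φ h R hΓ
end

section
/- Completeness of the F₂ deductive system: if Γ is a consistent set of F₂-formulas, φ is an F₂-formula, and every frame satisfying Γ satisfies φ, then φ is derivable from Γ using rules (I), (W), (HS), and (N). -/
/-! The canonical valuation of a finite set `A` of variables makes true exactly the variables `x`
with `Γ ⊢ A ⥽ x`. By cut it satisfies every derivable strict implication, and if `Γ` is consistent
then soundness makes it refute `A ⥽ X` whenever `A ⋢ X ∈ Γ`. The frame of all canonical valuations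
therefore satisfies `Γ`, and it satisfies `A ⥽ Y` only if `Γ ⊢ A ⥽ Y`. For `B ⋢ Z` one keeps only
the canonical valuations satisfying `B ⥽ Z`: if no instance of (N) yields `B ⋢ Z`, each
`A ⋢ X ∈ Γ` is still refuted there, by the valuation of `A ∪ {Z}` when `Γ ⊬ A ∧ Z ⥽ X`, and
otherwise by that of `A`, which falsifies some conjunct of `B`. -/

namespace Der2

variable {σ : Type} [DecidableEq σ] {Γ : Set (F2 σ)}

theorem sound {φ : F2 σ} (h : Der2 Γ φ) {R : Set (σ → Bool)} (hR : ∀ ψ ∈ Γ, ψ.sat R) :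
    φ.sat R := by
  induction h with
  | mem hφ => exact hR _ hφ
  | I X => exact fun w _ hw => hw X (Finset.mem_singleton_self X)
  | W _ hAB ih => exact fun w hw hB => ih w hw fun x hx => hB x (hAB hx)
  | HS _ _ ih₁ ih₂ =>
    intro w hw hAB
    refine ih₁ w hw fun x hx => ?_
    rcases Finset.mem_insert.mp hx with rfl | hx
    · exact ih₂ w hw fun y hy => hAB y (Finset.mem_union_left _ hy)
    · exact hAB x (Finset.mem_union_right _ hx)
  | @N A B X Z _ _ _ _ ih₁ ih₂ ih₃ =>
    obtain ⟨w, hw, hA, hX⟩ := ih₁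
    refine ⟨w, hw, fun y hy => ih₃ y hy w hw hA, ?_⟩
    by_contra hZ
    have hZA : ∀ x ∈ insert Z A, w x = true :=
      Finset.forall_mem_insert _ _ _ |>.mpr ⟨by simpa using hZ, hA⟩
    simp [ih₂ w hw hZA] at hX

theorem imp_of_mem {A : Finset σ} {x : σ} (hx : x ∈ A) : Der2 Γ (.imp A x) :=
  (I x).W (Finset.singleton_subset_iff.mpr hx)

theorem cut {A : Finset σ} {Z : σ} (B : Finset σ) (hZ : Der2 Γ (.imp (A ∪ B) Z))
    (hB : ∀ x ∈ B, Der2 Γ (.imp A x)) : Der2 Γ (.imp A Z) := by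
  induction B using Finset.induction_on with
  | empty => simpa using hZ
  | @insert b B _ ih =>
    rw [Finset.forall_mem_insert] at hB
    rw [Finset.union_insert] at hZ
    have hZ' : Der2 Γ (.imp (A ∪ (A ∪ B)) Z) := hZ.HS hB.1
    rw [← Finset.union_assoc, Finset.union_self] at hZ'
    exact ih hZ' hB.2

theorem imp_trans {A C : Finset σ} {Z : σ} (hZ : Der2 Γ (.imp C Z))
    (hC : ∀ x ∈ C, Der2 Γ (.imp A x)) : Der2 Γ (.imp A Z) :=
  cut C (hZ.W Finset.subset_union_right) hC

theorem not_imp_of_nimp_mem {R : Set (σ → Bool)} (hR : ∀ ψ ∈ Γ, ψ.sat R) {A : Finset σ} {X : σ}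
    (hAX : .nimp A X ∈ Γ) : ¬ Der2 Γ (.imp A X) := fun hd => by
  obtain ⟨w, hw, hA, hX⟩ := hR _ hAX
  simp [(sound hd hR) w hw hA] at hX

end Der2

section Canonical

variable {σ : Type} [DecidableEq σ] {Γ : Set (F2 σ)}

open Classical in
noncomputable def canonicalVal (Γ : Set (F2 σ)) (A : Finset σ) (x : σ) : Bool :=
  decide (Der2 Γ (.imp A x))

theorem canonicalVal_eq_true {A : Finset σ} {x : σ} :
    canonicalVal Γ A x = true ↔ Der2 Γ (.imp A x) := by
  simp [canonicalVal]

theorem canonicalVal_eq_false {A : Finset σ} {x : σ} :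
    canonicalVal Γ A x = false ↔ ¬ Der2 Γ (.imp A x) := by
  simp [canonicalVal]

theorem canonicalVal_of_mem {A : Finset σ} {x : σ} (hx : x ∈ A) : canonicalVal Γ A x = true :=
  canonicalVal_eq_true.mpr (Der2.imp_of_mem hx)

theorem sat_imp_image_canonicalVal {C : Finset σ} {z : σ} (hd : Der2 Γ (.imp C z))
    (S : Set (Finset σ)) : (F2.imp C z).sat (canonicalVal Γ '' S) := by
  rintro _ ⟨A, -, rfl⟩ hC
  simp only [canonicalVal_eq_true] at hC ⊢
  exact hd.imp_trans hC

theorem sat_nimp_image_canonicalVal {S : Set (Finset σ)} {A C : Finset σ} {X : σ}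
    (hC : C ∈ S) (hAC : A ⊆ C) (hX : ¬ Der2 Γ (.imp C X)) :
    (F2.nimp A X).sat (canonicalVal Γ '' S) :=
  ⟨canonicalVal Γ C, ⟨C, hC, rfl⟩,
    fun _ hx => canonicalVal_of_mem (hAC hx), canonicalVal_eq_false.mpr hX⟩

theorem sat_image_canonicalVal {S : Set (Finset σ)}
    (hS : ∀ A X, .nimp A X ∈ Γ → ∃ C ∈ S, A ⊆ C ∧ ¬ Der2 Γ (.imp C X)) :
    ∀ ψ ∈ Γ, ψ.sat (canonicalVal Γ '' S) := by
  rintro (⟨C, z⟩ | ⟨A, X⟩) hψ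
  · exact sat_imp_image_canonicalVal (.mem hψ) S
  · obtain ⟨C, hC, hAC, hX⟩ := hS A X hψ
    exact sat_nimp_image_canonicalVal hC hAC hX

theorem exists_refuting_of_not_der2_nimp {R : Set (σ → Bool)} (hR : ∀ ψ ∈ Γ, ψ.sat R)
    {A B : Finset σ} {X Z : σ} (hAX : .nimp A X ∈ Γ) (hB : B.Nonempty)
    (hBZ : ¬ Der2 Γ (.nimp B Z)) :
    ∃ C, ((∀ y ∈ B, Der2 Γ (.imp C y)) → Der2 Γ (.imp C Z)) ∧
      A ⊆ C ∧ ¬ Der2 Γ (.imp C X) := by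
  by_cases hZAX : Der2 Γ (.imp (insert Z A) X)
  · have hA : ¬ ∀ y ∈ B, Der2 Γ (.imp A y) := fun hA => hBZ (.N hB (.mem hAX) hZAX hA)
    exact ⟨A, fun h => absurd h hA, subset_rfl, Der2.not_imp_of_nimp_mem hR hAX⟩
  · exact ⟨insert Z A, fun _ => Der2.imp_of_mem (Finset.mem_insert_self Z A),
      Finset.subset_insert Z A, hZAX⟩

end Canonical

theorem stmt9_general {σ : Type} [DecidableEq σ]
    (Γ : Set (F2 σ)) (φ : F2 σ) (hφ : φ.ok)
    (hcons : ∃ R : Set (σ → Bool), R.Nonempty ∧ ∀ ψ ∈ Γ, ψ.sat R)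
    (hsem : ∀ R : Set (σ → Bool), R.Nonempty → (∀ ψ ∈ Γ, ψ.sat R) → φ.sat R) :
    Der2 Γ φ := by
  obtain ⟨R, -, hR⟩ := hcons
  cases φ with
  | imp A Y =>
    have hΓ := sat_image_canonicalVal (S := Set.univ) fun A X hAX =>
      ⟨A, trivial, subset_rfl, Der2.not_imp_of_nimp_mem hR hAX⟩
    have hY := hsem _ (Set.image_nonempty.mpr Set.univ_nonempty) hΓ (canonicalVal Γ A)
      ⟨A, trivial, rfl⟩ fun _ => canonicalVal_of_mem
    exact canonicalVal_eq_true.mp hY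
  | nimp B Z =>
    by_contra hBZ
    let S : Set (Finset σ) := {C | (∀ y ∈ B, Der2 Γ (.imp C y)) → Der2 Γ (.imp C Z)}
    have hZS : {Z} ∈ S := fun _ => Der2.I Z
    have hΓ := sat_image_canonicalVal (S := S) fun A X hAX =>
      exists_refuting_of_not_der2_nimp hR hAX hφ hBZ
    obtain ⟨_, ⟨C, hC, rfl⟩, hB, hZ⟩ := hsem _ ⟨_, Set.mem_image_of_mem _ hZS⟩ hΓ
    simp only [canonicalVal_eq_true, canonicalVal_eq_false] at hB hZ
    exact hZ (hC hB)

theorem stmt9 {σ : Type} [DecidableEq σ] [Infinite σ]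
    (Γ : Set (F2 σ)) (hok : ∀ ψ ∈ Γ, ψ.ok) (φ : F2 σ) (hφ : φ.ok)
    (hcons : ∃ R : Set (σ → Bool), R.Nonempty ∧ ∀ ψ ∈ Γ, ψ.sat R)
    (hsem : ∀ R : Set (σ → Bool), R.Nonempty → (∀ ψ ∈ Γ, ψ.sat R) → φ.sat R) :
    Der2 Γ φ :=
  stmt9_general Γ φ hφ hcons hsem
end

section
/- For any set Γ of F₂-formulas closed under rules (I), (W), and (HS), and any nonempty conjunction C of variables, the valuation w_C defined by w_C(X) = true iff (C ⥽ X) ∈ Γ satisfies every strict implication in Γ, and makes every conjunct of C true. -/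
/-!
Γ is closed under cut: if `C ⥽ x ∈ Γ` for every conjunct `x` of `A` and `A ⥽ Y ∈ Γ`, then
`C ⥽ Y ∈ Γ`, since (HS) replaces the conjuncts of `A` by `C` one at a time. The variables made
true by `w_C` are exactly the consequences of `C` in `Γ`, so `w_C` satisfies every strict
implication of `Γ`; and (I) followed by (W) makes each conjunct of `C` a consequence of `C`.
-/

section ClosedUnderRules

variable {σ : Type} {Γ : Set (F2 σ)}

theorem F2.imp_mem_of_mem
    (hI : ∀ X : σ, F2.imp {X} X ∈ Γ)
    (hW : ∀ (A B : Finset σ) (Y : σ), F2.imp A Y ∈ Γ → A ⊆ B → F2.imp B Y ∈ Γ)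
    {C : Finset σ} {x : σ} (hx : x ∈ C) : F2.imp C x ∈ Γ :=
  hW {x} C x (hI x) (Finset.singleton_subset_iff.2 hx)

theorem F2.imp_union_mem_of_forall_imp_mem [DecidableEq σ]
    (hW : ∀ (A B : Finset σ) (Y : σ), F2.imp A Y ∈ Γ → A ⊆ B → F2.imp B Y ∈ Γ)
    (hHS : ∀ (A B : Finset σ) (X Y : σ),
      F2.imp (insert X B) Y ∈ Γ → F2.imp A X ∈ Γ → F2.imp (A ∪ B) Y ∈ Γ)
    {A B C : Finset σ} {Y : σ} (hA : F2.imp (A ∪ B) Y ∈ Γ)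
    (hC : ∀ x ∈ A, F2.imp C x ∈ Γ) : F2.imp (C ∪ B) Y ∈ Γ := by
  induction A using Finset.induction_on generalizing B with
  | empty => exact hW B _ Y (by rwa [Finset.empty_union] at hA) Finset.subset_union_right
  | @insert X A _ ih =>
    rw [Finset.insert_union] at hA
    have hCAB : F2.imp (C ∪ (A ∪ B)) Y ∈ Γ :=
      hHS C _ X Y hA (hC X (Finset.mem_insert_self X A))
    rw [Finset.union_left_comm] at hCAB
    simpa only [Finset.union_left_idem] using
      ih hCAB fun x hx => hC x (Finset.mem_insert_of_mem hx)

theorem F2.imp_mem_of_forall_imp_mem [DecidableEq σ]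
    (hW : ∀ (A B : Finset σ) (Y : σ), F2.imp A Y ∈ Γ → A ⊆ B → F2.imp B Y ∈ Γ)
    (hHS : ∀ (A B : Finset σ) (X Y : σ),
      F2.imp (insert X B) Y ∈ Γ → F2.imp A X ∈ Γ → F2.imp (A ∪ B) Y ∈ Γ)
    {A C : Finset σ} {Y : σ} (hA : F2.imp A Y ∈ Γ) (hC : ∀ x ∈ A, F2.imp C x ∈ Γ) :
    F2.imp C Y ∈ Γ := by
  simpa only [Finset.union_empty] using
    F2.imp_union_mem_of_forall_imp_mem (B := ∅) hW hHS (by rwa [Finset.union_empty]) hC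

end ClosedUnderRules

theorem stmt10_general {σ : Type} [DecidableEq σ] (Γ : Set (F2 σ))
    (hI : ∀ X : σ, F2.imp {X} X ∈ Γ)
    (hW : ∀ (A B : Finset σ) (Y : σ), F2.imp A Y ∈ Γ → A ⊆ B → F2.imp B Y ∈ Γ)
    (hHS : ∀ (A B : Finset σ) (X Y : σ),
      F2.imp (insert X B) Y ∈ Γ → F2.imp A X ∈ Γ → F2.imp (A ∪ B) Y ∈ Γ)
    (C : Finset σ) (wC : σ → Bool)
    (hw : ∀ X : σ, wC X = true ↔ F2.imp C X ∈ Γ) :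
    (∀ (A : Finset σ) (Y : σ), F2.imp A Y ∈ Γ → (∀ x ∈ A, wC x = true) → wC Y = true) ∧
      ∀ x ∈ C, wC x = true := by
  refine ⟨fun A Y hA hAw => ?_, fun x hx => ?_⟩
  · rw [hw]
    exact F2.imp_mem_of_forall_imp_mem hW hHS hA fun x hx => (hw x).1 (hAw x hx)
  · rw [hw]
    exact F2.imp_mem_of_mem hI hW hx

theorem stmt10 {σ : Type} [DecidableEq σ] (Γ : Set (F2 σ))
    (hI : ∀ X : σ, F2.imp {X} X ∈ Γ)
    (hW : ∀ (A B : Finset σ) (Y : σ), F2.imp A Y ∈ Γ → A ⊆ B → F2.imp B Y ∈ Γ)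
    (hHS : ∀ (A B : Finset σ) (X Y : σ),
      F2.imp (insert X B) Y ∈ Γ → F2.imp A X ∈ Γ → F2.imp (A ∪ B) Y ∈ Γ)
    (C : Finset σ) (hC : C.Nonempty) (wC : σ → Bool)
    (hw : ∀ X : σ, wC X = true ↔ F2.imp C X ∈ Γ) :
    (∀ (A : Finset σ) (Y : σ), F2.imp A Y ∈ Γ → (∀ x ∈ A, wC x = true) → wC Y = true) ∧
      ∀ x ∈ C, wC x = true :=
  stmt10_general Γ hI hW hHS C wC hw
end

section
/- For any set Γ of F₁-formulas closed under rules (I) and (HS), and variables X and Z, the valuation w_{X,Z} defined by w_{X,Z}(U) = true iff (X ⥽ U) ∈ Γ or (Z ⥽ U) ∈ Γ satisfies every strict implication in Γ, and makes both X and Z true. -/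
theorem stmt11 {σ : Type} (Γ : Set (F1 σ))
    (hI : ∀ U : σ, F1.imp U U ∈ Γ)
    (hHS : ∀ U V W : σ, F1.imp U V ∈ Γ → F1.imp V W ∈ Γ → F1.imp U W ∈ Γ)
    (X Z : σ) (wXZ : σ → Bool)
    (hw : ∀ U : σ, wXZ U = true ↔ (F1.imp X U ∈ Γ ∨ F1.imp Z U ∈ Γ)) :
    (∀ U V : σ, F1.imp U V ∈ Γ → wXZ U = true → wXZ V = true) ∧
      wXZ X = true ∧ wXZ Z = true := by
  refine ⟨fun U V hUV hU => (hw V).2 ?_, (hw X).2 (.inl (hI X)), (hw Z).2 (.inr (hI Z))⟩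
  exact ((hw U).1 hU).imp (hHS X U V · hUV) (hHS Z U V · hUV)
end
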